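/- arXiv:2412.11581 — 3 statements merged into one kernel-verified Lean document; each statement's English description precedes it below -/
import Mathlib

section
/- The function q(x,t) = 1 - 4/(4(x-6t)^2+1) satisfies the focusing complex mKdV equation q_t + q_{xxx} + 6|q|^2 q_x = 0 for all real x, t. -/
/-!
Along the characteristic `u = x - 6t` the soliton is a travelling wave `q = P(x - 6t)` with
profile `P u = 1 - 4 / (4u² + 1)`. For a travelling wave of speed `c`, `q_t = -c P'`, so the
mKdV equation reduces to the ODE `P''' + (6P² - c) P' = 0`. With `w = 4u² + 1` one finds
`P' = 32u / w²`, `P''' = 1536u(4u² - 1) / w⁴` and `P² - 1 = 8(1 - 4u²) / w²`, so the two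
terms of the ODE cancel.
-/

theorem deriv_comp_const_sub_mul (f : ℝ → ℝ) (x c t : ℝ) :
    deriv (fun s => f (x - c * s)) t = -c * deriv f (x - c * t) := by
  rw [deriv_comp_mul_left (f := fun y => f (x - y)), deriv_comp_const_sub, smul_eq_mul, mul_neg,
    neg_mul]

theorem mKdV_travelingWave_eq (f : ℝ → ℝ) (c x t : ℝ) :
    deriv (fun s => f (x - c * s)) t
        + iteratedDeriv 3 (fun y => f (y - c * t)) x
        + 6 * f (x - c * t) ^ 2 * deriv (fun y => f (y - c * t)) x
      = iteratedDeriv 3 f (x - c * t) + (6 * f (x - c * t) ^ 2 - c) * deriv f (x - c * t) := by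
  rw [deriv_comp_const_sub_mul, iteratedDeriv_comp_sub_const, deriv_comp_sub_const]
  ring

theorem HasDerivAt.div_pow {p w : ℝ → ℝ} {p' w' u : ℝ} (k : ℕ)
    (hp : HasDerivAt p p' u) (hw : HasDerivAt w w' u) (hw0 : w u ≠ 0) :
    HasDerivAt (fun u => p u / w u ^ k) ((p' * w u - k * w' * p u) / w u ^ (k + 1)) u := by
  refine (hp.fun_div (hw.fun_pow k) (pow_ne_zero k hw0)).congr_deriv ?_
  rcases k with _ | k
  · simp [field]
  · rw [Nat.add_sub_cancel]
    field_simp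
    ring

theorem hasDerivAt_mul_sq_add (a b u : ℝ) :
    HasDerivAt (fun u => a * u ^ 2 + b) (2 * a * u) u := by
  simpa [mul_comm, mul_left_comm] using ((hasDerivAt_pow 2 u).const_mul a).add_const b

noncomputable def solitonProfile (u : ℝ) : ℝ := 1 - 4 / (4 * u ^ 2 + 1)

theorem deriv_solitonProfile :
    deriv solitonProfile = fun u => 32 * u / (4 * u ^ 2 + 1) ^ 2 := by
  funext u
  have h := ((hasDerivAt_const u (4 : ℝ)).div_pow 1 (hasDerivAt_mul_sq_add 4 1 u)
    (by positivity)).const_sub 1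
  simp only [pow_one] at h
  refine h.deriv.trans ?_
  push_cast
  ring

theorem deriv_deriv_solitonProfile :
    deriv (deriv solitonProfile) = fun u => (-384 * u ^ 2 + 32) / (4 * u ^ 2 + 1) ^ 3 := by
  funext u
  rw [deriv_solitonProfile]
  refine (((hasDerivAt_id' u).const_mul 32).div_pow 2 (hasDerivAt_mul_sq_add 4 1 u)
    (by positivity)).deriv.trans ?_
  push_cast
  ring

theorem iteratedDeriv_three_solitonProfile (u : ℝ) :
    iteratedDeriv 3 solitonProfile u = 1536 * u * (4 * u ^ 2 - 1) / (4 * u ^ 2 + 1) ^ 4 := by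
  have hw0 : 4 * u ^ 2 + 1 ≠ 0 := by positivity
  rw [iteratedDeriv_succ, iteratedDeriv_succ, iteratedDeriv_one, deriv_deriv_solitonProfile]
  refine ((hasDerivAt_mul_sq_add (-384) 32 u).div_pow 3 (hasDerivAt_mul_sq_add 4 1 u)
    hw0).deriv.trans ?_
  push_cast
  field_simp
  ring

theorem solitonProfile_ode (u : ℝ) :
    iteratedDeriv 3 solitonProfile u
      + (6 * solitonProfile u ^ 2 - 6) * deriv solitonProfile u = 0 := by
  rw [iteratedDeriv_three_solitonProfile, deriv_solitonProfile, solitonProfile]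
  have hw0 : 4 * u ^ 2 + 1 ≠ 0 := by positivity
  field_simp
  ring

/-- The first-order rational soliton `q(x,t) = 1 - 4/(4(x-6t)^2+1)` satisfies the
focusing complex mKdV equation `q_t + q_{xxx} + 6 q^2 q_x = 0` (real-valued, so
`|q|^2 = q^2`). -/
theorem first_order_rational_soliton_solves_cmKdV
    (q : ℝ → ℝ → ℝ)
    (hq : ∀ x t : ℝ, q x t = 1 - 4 / (4 * (x - 6 * t) ^ 2 + 1)) :
    ∀ x t : ℝ,
      deriv (fun s => q x s) t
        + iteratedDeriv 3 (fun y => q y t) x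
        + 6 * (q x t) ^ 2 * deriv (fun y => q y t) x = 0 := by
  obtain rfl : q = fun x t => solitonProfile (x - 6 * t) := funext₂ hq
  intro x t
  rw [mKdV_travelingWave_eq]
  exact solitonProfile_ode _
end

section
/- For any real constants α, c, k, ϑ, the function q(x,t) = α sech(αx - (α^3-3k^2α)t + c) e^{i(kx+(k^3-3α^2 k)t+ϑ)} satisfies the focusing complex mKdV equation q_t + q_{xxx} + 6|q|^2 q_x = 0. -/
/-!
Both slices `y ↦ q(y,t)` and `s ↦ q(x,s)` are waves `A sech(a y + b) e^{i(p y + r)}`, whose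
logarithmic derivative `m = i p - a tanh(a y + b)` satisfies `m' = -a² (1 - tanh²)`. Hence
`q_t`, `q_x` and `q_xxx = (m'' + 3 m m' + m³) q` are all polynomials in `T = tanh θ` times `q`,
as is `|q|² = α² (1 - T²)`, and the equation becomes a polynomial identity in `T`.
-/

open Complex

namespace Real

theorem one_div_cosh_sq (x : ℝ) : (1 / cosh x) ^ 2 = 1 - tanh x ^ 2 := by
  have hcosh := cosh_pos x
  rw [tanh_eq_sinh_div_cosh]
  field_simp
  linarith [cosh_sq x]

theorem hasDerivAt_tanh (x : ℝ) : HasDerivAt tanh (1 - tanh x ^ 2) x := by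
  have hderiv := (hasDerivAt_sinh x).div (hasDerivAt_cosh x) (cosh_pos x).ne'
  rw [← one_div_cosh_sq, funext tanh_eq_sinh_div_cosh]
  refine hderiv.congr_deriv ?_
  rw [div_pow, one_pow, ← cosh_sq_sub_sinh_sq x]
  ring

theorem hasDerivAt_one_div_cosh (x : ℝ) :
    HasDerivAt (fun y => 1 / cosh y) (-(1 / cosh x) * tanh x) x := by
  have hderiv := (hasDerivAt_cosh x).fun_inv (cosh_pos x).ne'
  simp only [one_div]
  refine hderiv.congr_deriv ?_
  rw [tanh_eq_sinh_div_cosh]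
  ring

end Real

section LogDeriv

variable {𝕜 𝔸 : Type*} [NontriviallyNormedField 𝕜] [NormedCommRing 𝔸] [NormedAlgebra 𝕜 𝔸]

theorem iteratedDeriv_three_of_hasDerivAt_mul {u m m' m'' : 𝕜 → 𝔸}
    (hu : ∀ y, HasDerivAt u (m y * u y) y) (hm : ∀ y, HasDerivAt m (m' y) y)
    (hm' : ∀ y, HasDerivAt m' (m'' y) y) (x : 𝕜) :
    iteratedDeriv 3 u x = (m'' x + 3 * m x * m' x + m x ^ 3) * u x := by
  have h1 : deriv u = fun y => m y * u y := funext fun y => (hu y).deriv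
  have h2 : deriv (fun y => m y * u y) = fun y => (m' y + m y ^ 2) * u y :=
    funext fun y => ((hm y).fun_mul (hu y)).deriv.trans (by ring)
  have h3 : HasDerivAt (fun y => (m' y + m y ^ 2) * u y)
      ((m'' x + 3 * m x * m' x + m x ^ 3) * u x) x := by
    convert ((hm' x).fun_add ((hm x).fun_pow 2)).fun_mul (hu x) using 1
    push_cast
    ring
  rw [iteratedDeriv_succ', iteratedDeriv_succ', iteratedDeriv_one, h1, h2, h3.deriv]

end LogDeriv

noncomputable def sechWave (A a b p r : ℝ) (y : ℝ) : ℂ :=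
  A * ((1 / Real.cosh (a * y + b) : ℝ) : ℂ) * exp (I * (p * y + r))

namespace sechWave

variable (A a b p r : ℝ)

theorem hasDerivAt (y : ℝ) :
    HasDerivAt (sechWave A a b p r)
      ((I * p - a * Real.tanh (a * y + b)) * sechWave A a b p r y) y := by
  have hsech : HasDerivAt (fun y => 1 / Real.cosh (a * y + b))
      (-(1 / Real.cosh (a * y + b)) * Real.tanh (a * y + b) * a) y :=
    (Real.hasDerivAt_one_div_cosh _).comp y
      (((hasDerivAt_id' y).const_mul a).add_const b |>.congr_deriv (mul_one a))
  have hphase : HasDerivAt (fun y : ℝ => exp (I * (p * y + r)))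
      (exp (I * (p * y + r)) * (I * p)) y := by
    have := ((((hasDerivAt_id' y).const_mul p).add_const r).ofReal_comp).const_mul I
    push_cast at this
    exact (this.congr_deriv (by ring)).cexp
  refine ((hsech.ofReal_comp.const_mul (A : ℂ)).fun_mul hphase).congr_deriv ?_
  simp only [sechWave]
  push_cast
  ring

theorem iteratedDeriv_three (y : ℝ) :
    iteratedDeriv 3 (sechWave A a b p r) y =
      (2 * a ^ 3 * Real.tanh (a * y + b) * (1 - Real.tanh (a * y + b) ^ 2)
        - 3 * a ^ 2 * (I * p - a * Real.tanh (a * y + b)) * (1 - Real.tanh (a * y + b) ^ 2)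
        + (I * p - a * Real.tanh (a * y + b)) ^ 3) * sechWave A a b p r y := by
  set T : ℝ → ℂ := fun y => (Real.tanh (a * y + b) : ℂ)
  have hT (y : ℝ) : HasDerivAt T (a * (1 - T y ^ 2)) y := by
    have := ((Real.hasDerivAt_tanh _).comp y
      (((hasDerivAt_id' y).const_mul a).add_const b |>.congr_deriv (mul_one a))).ofReal_comp
    refine this.congr_deriv ?_
    simp only [T, ofReal_mul, ofReal_sub, ofReal_one, ofReal_pow]
    ring
  refine iteratedDeriv_three_of_hasDerivAt_mul (m := fun y => I * p - a * T y)
    (m' := fun y => -a ^ 2 * (1 - T y ^ 2)) (m'' := fun y => 2 * a ^ 3 * T y * (1 - T y ^ 2))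
    (hasDerivAt A a b p r)
    (fun y => ((hT y).const_mul _).const_sub _ |>.congr_deriv (by ring))
    (fun y => ((hT y).fun_pow 2 |>.const_sub 1 |>.const_mul _).congr_deriv (by ring)) y
    |>.trans (by ring)

theorem norm_sq (y : ℝ) :
    ‖sechWave A a b p r y‖ ^ 2 = A ^ 2 * (1 - Real.tanh (a * y + b) ^ 2) := by
  have hphase : I * (p * y + r) = ((p * y + r : ℝ) : ℂ) * I := by push_cast; ring
  rw [sechWave, hphase, norm_mul, norm_mul, norm_exp_ofReal_mul_I, norm_real, norm_real,
    Real.norm_eq_abs, Real.norm_eq_abs, mul_one, mul_pow, sq_abs, sq_abs, Real.one_div_cosh_sq]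

end sechWave

/-- The solitary wave `q(x,t) = α sech(αx-(α^3-3k^2α)t+c) e^{i(kx+(k^3-3α^2k)t+ϑ)}`
satisfies the focusing complex mKdV equation `q_t + q_{xxx} + 6|q|^2 q_x = 0`. -/
theorem solitary_wave_solves_cmKdV
    (α c k ϑ : ℝ) (q : ℝ → ℝ → ℂ)
    (hq : ∀ x t : ℝ, q x t =
      (α : ℂ) * ((1 / Real.cosh (α * x - (α ^ 3 - 3 * k ^ 2 * α) * t + c) : ℝ) : ℂ) *
        Complex.exp (Complex.I *
          ((k : ℂ) * (x : ℂ) + ((k : ℂ) ^ 3 - 3 * (α : ℂ) ^ 2 * (k : ℂ)) * (t : ℂ)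
            + (ϑ : ℂ)))) :
    ∀ x t : ℝ,
      deriv (fun s => q x s) t
        + iteratedDeriv 3 (fun y => q y t) x
        + 6 * (‖q x t‖ : ℂ) ^ 2 * deriv (fun y => q y t) x = 0 := by
  intro x t
  have hqx : (fun y => q y t) =
      sechWave α α (c - (α ^ 3 - 3 * k ^ 2 * α) * t) k ((k ^ 3 - 3 * α ^ 2 * k) * t + ϑ) :=
    funext fun y => by rw [hq, sechWave]; push_cast; ring_nf
  have hqt : (fun s => q x s) =
      sechWave α (-(α ^ 3 - 3 * k ^ 2 * α)) (α * x + c) (k ^ 3 - 3 * α ^ 2 * k) (k * x + ϑ) :=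
    funext fun s => by rw [hq, sechWave]; push_cast; ring_nf
  set θ := α * x - (α ^ 3 - 3 * k ^ 2 * α) * t + c
  have hθx : α * x + (c - (α ^ 3 - 3 * k ^ 2 * α) * t) = θ := by ring
  have hθt : -(α ^ 3 - 3 * k ^ 2 * α) * t + (α * x + c) = θ := by ring
  have h_t : deriv (fun s => q x s) t =
      (I * (k ^ 3 - 3 * α ^ 2 * k) + (α ^ 3 - 3 * k ^ 2 * α) * Real.tanh θ) * q x t := by
    rw [hqt, (sechWave.hasDerivAt _ _ _ _ _ t).deriv, hθt, ← congrFun hqt t]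
    push_cast
    ring
  have h_x : deriv (fun y => q y t) x = (I * k - α * Real.tanh θ) * q x t := by
    rw [hqx, (sechWave.hasDerivAt _ _ _ _ _ x).deriv, hθx, ← congrFun hqx x]
  have h_xxx : iteratedDeriv 3 (fun y => q y t) x =
      (2 * α ^ 3 * Real.tanh θ * (1 - Real.tanh θ ^ 2)
        - 3 * α ^ 2 * (I * k - α * Real.tanh θ) * (1 - Real.tanh θ ^ 2)
        + (I * k - α * Real.tanh θ) ^ 3) * q x t := by
    rw [hqx, sechWave.iteratedDeriv_three, hθx, ← congrFun hqx x]
  have h_norm : (‖q x t‖ : ℂ) ^ 2 = α ^ 2 * (1 - Real.tanh θ ^ 2) := by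
    rw [congrFun hqx x, ← hθx]
    exact_mod_cast sechWave.norm_sq _ _ _ _ _ x
  rw [h_t, h_x, h_xxx, h_norm]
  linear_combination (I * k ^ 3 - 3 * k ^ 2 * α * Real.tanh θ) * q x t * I_sq
end

section
/- Suppose q : ℝ → ℝ is smooth, nowhere-zero, and satisfies the system (from T=0): 3q q'' + X(q q''' - q' q'' + 4q³ q') - 2(q')² + 4q⁴ = 0 and ((q + X q')')² + 4q²(q + X q')² - 64 q² = 0. Then f := q'/q satisfies X²(f f'' - (f')² - f⁴) + X(f'' + f f' - 3f³) + 3f' - 3f² + 64 = 0. -/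
/-- Elimination at `T = 0`: if a smooth nowhere-zero `q : ℝ → ℝ` satisfies
`3qq'' + X(qq''' - q'q'' + 4q³q') - 2(q')² + 4q⁴ = 0` and
`((q+Xq')')² + 4q²(q+Xq')² - 64q² = 0`, then `f := q'/q` satisfies the
Painlevé-III-type ODE
`X²(ff'' - (f')² - f⁴) + X(f'' + ff' - 3f³) + 3f' - 3f² + 64 = 0`. -/
theorem painleveIII_reduction_T0
    (q : ℝ → ℝ) (hq : ContDiff ℝ (⊤ : ℕ∞) q) (hq0 : ∀ X, q X ≠ 0)
    (h1 : ∀ X : ℝ,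
      3 * q X * iteratedDeriv 2 q X
        + X * (q X * iteratedDeriv 3 q X - deriv q X * iteratedDeriv 2 q X
          + 4 * (q X) ^ 3 * deriv q X)
        - 2 * (deriv q X) ^ 2 + 4 * (q X) ^ 4 = 0)
    (h2 : ∀ X : ℝ,
      (deriv (fun y => q y + y * deriv q y) X) ^ 2
        + 4 * (q X) ^ 2 * (q X + X * deriv q X) ^ 2
        - 64 * (q X) ^ 2 = 0)
    (f : ℝ → ℝ) (hf : f = fun X => deriv q X / q X) :
    ∀ X : ℝ,
      X ^ 2 * (f X * iteratedDeriv 2 f X - (deriv f X) ^ 2 - (f X) ^ 4)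
        + X * (iteratedDeriv 2 f X + f X * deriv f X - 3 * (f X) ^ 3)
        + 3 * deriv f X - 3 * (f X) ^ 2 + 64 = 0 := by
  subst hf
  have hq' : ContDiff ℝ (⊤ : ℕ∞) q := hq.of_le (by simp)
  have hdq : ∀ (n : ℕ) (y : ℝ), DifferentiableAt ℝ (iteratedDeriv n q) y := by
    intro n y
    have h : ContDiff ℝ (⊤ : ℕ∞) (iteratedDeriv n q) := by
      rw [iteratedDeriv_eq_iterate]; exact hq'.iterate_deriv n
    exact (h.differentiable (by simp)).differentiableAt
  have hdq0 : ∀ y, DifferentiableAt ℝ q y := fun y => by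
    have := hdq 0 y; rwa [iteratedDeriv_zero] at this
  have hdq1 : ∀ y, DifferentiableAt ℝ (deriv q) y := fun y => by
    have := hdq 1 y; rwa [iteratedDeriv_one] at this
  have hdq2 : ∀ y, DifferentiableAt ℝ (iteratedDeriv 2 q) y := hdq 2
  have e2 : deriv (deriv q) = iteratedDeriv 2 q := by
    rw [iteratedDeriv_succ, iteratedDeriv_one]
  have e3 : deriv (iteratedDeriv 2 q) = iteratedDeriv 3 q := (iteratedDeriv_succ (n := 2)).symm
  -- first derivative of f
  have hfd : ∀ y, deriv (fun z => deriv q z / q z) y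
      = (iteratedDeriv 2 q y * q y - (deriv q y) ^ 2) / (q y) ^ 2 := by
    intro y
    rw [deriv_fun_div (hdq1 y) (hdq0 y) (hq0 y), ← e2]
    ring
  intro X
  -- second derivative of f
  have hfd2 : iteratedDeriv 2 (fun z => deriv q z / q z) X
      = (iteratedDeriv 3 q X * (q X) ^ 2 - 3 * q X * deriv q X * iteratedDeriv 2 q X
          + 2 * (deriv q X) ^ 3) / (q X) ^ 3 := by
    rw [iteratedDeriv_succ, iteratedDeriv_one]
    have hfun : deriv (fun z => deriv q z / q z)
        = fun y => (iteratedDeriv 2 q y * q y - (deriv q y) ^ 2) / (q y) ^ 2 := funext hfd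
    rw [hfun]
    have hnum : DifferentiableAt ℝ (fun y => iteratedDeriv 2 q y * q y - (deriv q y) ^ 2) X :=
      ((hdq2 X).mul (hdq0 X)).sub ((hdq1 X).pow 2)
    have hden : DifferentiableAt ℝ (fun y => (q y) ^ 2) X := (hdq0 X).pow 2
    rw [deriv_fun_div hnum hden (pow_ne_zero 2 (hq0 X)),
      deriv_fun_sub (f := fun y => iteratedDeriv 2 q y * q y) (g := fun y => deriv q y ^ 2)
        ((hdq2 X).mul (hdq0 X)) ((hdq1 X).pow 2),
      deriv_fun_mul (hdq2 X) (hdq0 X), deriv_fun_pow (hdq1 X) 2, deriv_fun_pow (hdq0 X) 2, e2, e3]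
    have h0 := hq0 X
    field_simp
    ring
  -- derivative appearing in h2
  have hd3 : deriv (fun y => q y + y * deriv q y) X
      = 2 * deriv q X + X * iteratedDeriv 2 q X := by
    have h : HasDerivAt (fun y => q y + y * deriv q y)
        (deriv q X + (1 * deriv q X + X * deriv (deriv q) X)) X :=
      (hdq0 X).hasDerivAt.add ((hasDerivAt_id X).mul (hdq1 X).hasDerivAt)
    rw [h.deriv, e2]
    ring
  have h1X := h1 X
  have h2X := h2 X
  rw [hd3] at h2X
  have h0 := hq0 X
  have key : (X ^ 2 * ((deriv q X / q X) *
        ((iteratedDeriv 3 q X * (q X) ^ 2 - 3 * q X * deriv q X * iteratedDeriv 2 q X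
          + 2 * (deriv q X) ^ 3) / (q X) ^ 3)
        - ((iteratedDeriv 2 q X * q X - (deriv q X) ^ 2) / (q X) ^ 2) ^ 2
        - (deriv q X / q X) ^ 4)
      + X * ((iteratedDeriv 3 q X * (q X) ^ 2 - 3 * q X * deriv q X * iteratedDeriv 2 q X
          + 2 * (deriv q X) ^ 3) / (q X) ^ 3
        + (deriv q X / q X) * ((iteratedDeriv 2 q X * q X - (deriv q X) ^ 2) / (q X) ^ 2)
        - 3 * (deriv q X / q X) ^ 3)
      + 3 * ((iteratedDeriv 2 q X * q X - (deriv q X) ^ 2) / (q X) ^ 2)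
      - 3 * (deriv q X / q X) ^ 2 + 64) * (q X) ^ 4
      = ((q X + X * deriv q X) * q X) *
          (3 * q X * iteratedDeriv 2 q X
            + X * (q X * iteratedDeriv 3 q X - deriv q X * iteratedDeriv 2 q X
              + 4 * (q X) ^ 3 * deriv q X)
            - 2 * (deriv q X) ^ 2 + 4 * (q X) ^ 4)
        - (q X) ^ 2 *
          ((2 * deriv q X + X * iteratedDeriv 2 q X) ^ 2
            + 4 * (q X) ^ 2 * (q X + X * deriv q X) ^ 2 - 64 * (q X) ^ 2) := by
    field_simp
    ring
  rw [h1X, h2X] at key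
  simp only [mul_zero, sub_zero] at key
  have key2 := mul_eq_zero.mp key
  have hq4 : (q X) ^ 4 ≠ 0 := pow_ne_zero 4 h0
  have hmain := key2.resolve_right hq4
  rw [hfd2, hfd X]
  beta_reduce
  linear_combination hmain
end
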